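/- Let Q be symmetric positive definite, σ > 0, and let M₁, M₂ be matrices with M_kᵀQ + QM_k ≺ −σQ for k = 1, 2. Let x_c, x_r ∈ ℝⁿ be distinct points and let x̆ be a point on the segment between them. Then (x_c − x_r)ᵀQ(M₁(x_c − x̆) + M₂(x̆ − x_r)) < −(σ/2)‖x_c − x_r‖_Q (‖x_c − x̆‖_Q + ‖x̆ − x_r‖_Q) = −(σ/2)‖x_c − x_r‖²_Q. -/

import Mathlib

open Matrix

/-- The norm induced by a positive definite matrix `Q`. -/
noncomputable def normQ {n : ℕ} (Q : Matrix (Fin n) (Fin n) ℝ) (v : Fin n → ℝ) : ℝ :=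
  Real.sqrt (v ⬝ᵥ Q *ᵥ v)

/-- Combined decay estimate across a switching boundary, using an intermediate
point on the segment between `x_c` and `x_r`. -/
theorem decay_across_boundary
    {n : ℕ} (Q M₁ M₂ : Matrix (Fin n) (Fin n) ℝ) (σ : ℝ)
    (hQ : Q.PosDef) (hσ : 0 < σ)
    (hM₁ : (-(M₁ᵀ * Q + Q * M₁ + σ • Q)).PosDef)
    (hM₂ : (-(M₂ᵀ * Q + Q * M₂ + σ • Q)).PosDef)
    (x_c x_r xb : Fin n → ℝ) (hne : x_c ≠ x_r)
    (lam : ℝ) (hlam : lam ∈ Set.Icc (0 : ℝ) 1)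
    (hxb : xb = (1 - lam) • x_c + lam • x_r) :
    (x_c - x_r) ⬝ᵥ Q *ᵥ (M₁ *ᵥ (x_c - xb) + M₂ *ᵥ (xb - x_r))
        < -(σ / 2) * normQ Q (x_c - x_r) * (normQ Q (x_c - xb) + normQ Q (xb - x_r))
      ∧ -(σ / 2) * normQ Q (x_c - x_r) * (normQ Q (x_c - xb) + normQ Q (xb - x_r))
          = -(σ / 2) * normQ Q (x_c - x_r) ^ 2 := by
  obtain ⟨hl0, hl1⟩ := hlam
  set d : Fin n → ℝ := x_c - x_r with hd
  have hdne : d ≠ 0 := sub_ne_zero.mpr hne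
  have ha : 0 < d ⬝ᵥ Q *ᵥ d := by
    have := hQ.dotProduct_mulVec_pos hdne
    simpa using this
  set a : ℝ := d ⬝ᵥ Q *ᵥ d with haa
  -- symmetry helper
  have hQs : Qᵀ = Q := by
    have h := hQ.1.eq
    rw [← Matrix.conjTranspose_eq_transpose_of_trivial]
    exact h
  have hsym : ∀ u v : Fin n → ℝ, u ⬝ᵥ Q *ᵥ v = v ⬝ᵥ Q *ᵥ u := by
    intro u v
    rw [Matrix.dotProduct_mulVec, ← Matrix.vecMul_transpose, hQs,
      dotProduct_comm v]
  have key : ∀ M : Matrix (Fin n) (Fin n) ℝ, (-(Mᵀ * Q + Q * M + σ • Q)).PosDef →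
      d ⬝ᵥ Q *ᵥ (M *ᵥ d) < -(σ / 2) * a := by
    intro M hM
    have h := hM.dotProduct_mulVec_pos hdne
    simp only [RCLike.star_def, starRingEnd_apply, star_trivial, Matrix.neg_mulVec,
      Matrix.add_mulVec, dotProduct_neg, dotProduct_add,
      Matrix.smul_mulVec, dotProduct_smul] at h
    have e1 : d ⬝ᵥ (Mᵀ * Q) *ᵥ d = d ⬝ᵥ Q *ᵥ (M *ᵥ d) := by
      rw [← Matrix.mulVec_mulVec, Matrix.dotProduct_mulVec, Matrix.vecMul_transpose]
      exact hsym (M *ᵥ d) d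
    have e2 : d ⬝ᵥ (Q * M) *ᵥ d = d ⬝ᵥ Q *ᵥ (M *ᵥ d) := by
      rw [← Matrix.mulVec_mulVec]
    rw [e1, e2] at h
    simp only [smul_eq_mul] at h
    linarith
  have h1 := key M₁ hM₁
  have h2 := key M₂ hM₂
  -- decompositions
  have hcb : x_c - xb = lam • d := by rw [hxb, hd]; module
  have hbr : xb - x_r = (1 - lam) • d := by rw [hxb, hd]; module
  have hsq : normQ Q d ^ 2 = a := by
    rw [normQ, Real.sq_sqrt ha.le]
  have hnpos : 0 < normQ Q d := Real.sqrt_pos.mpr ha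
  have hscale : ∀ t : ℝ, 0 ≤ t → normQ Q (t • d) = t * normQ Q d := by
    intro t ht
    have : (t • d) ⬝ᵥ Q *ᵥ (t • d) = t ^ 2 * a := by
      rw [Matrix.mulVec_smul, smul_dotProduct, dotProduct_smul]
      simp [haa]; ring
    rw [normQ, this, Real.sqrt_mul (sq_nonneg t), Real.sqrt_sq ht, normQ]
  have hn1 : normQ Q (x_c - xb) = lam * normQ Q d := by rw [hcb, hscale lam hl0]
  have hn2 : normQ Q (xb - x_r) = (1 - lam) * normQ Q d := by
    rw [hbr, hscale (1 - lam) (by linarith)]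
  have hlhs : d ⬝ᵥ Q *ᵥ (M₁ *ᵥ (x_c - xb) + M₂ *ᵥ (xb - x_r))
      = lam * (d ⬝ᵥ Q *ᵥ (M₁ *ᵥ d)) + (1 - lam) * (d ⬝ᵥ Q *ᵥ (M₂ *ᵥ d)) := by
    rw [hcb, hbr]
    simp [Matrix.mulVec_smul, Matrix.mulVec_add, dotProduct_add,
      dotProduct_smul]
  constructor
  · rw [hlhs, hn1, hn2]
    have hsum : lam * normQ Q d + (1 - lam) * normQ Q d = normQ Q d := by ring
    rw [hsum]
    have : -(σ / 2) * normQ Q d * normQ Q d = -(σ / 2) * a := by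
      have : normQ Q d * normQ Q d = a := by nlinarith [hsq]
      nlinarith [this]
    rw [this]
    rcases eq_or_lt_of_le hl0 with h0 | h0
    · rw [← h0]; linarith
    · nlinarith [mul_pos h0 (by linarith : 0 < -(σ / 2) * a - d ⬝ᵥ Q *ᵥ (M₁ *ᵥ d)),
        mul_nonneg (by linarith : (0:ℝ) ≤ 1 - lam)
          (by linarith : 0 ≤ -(σ / 2) * a - d ⬝ᵥ Q *ᵥ (M₂ *ᵥ d))]
  · rw [hn1, hn2]; ring
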